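/- arXiv:2602.03515 — 4 statements merged into one kernel-verified Lean document; each statement's English description precedes it below -/
import Mathlib

section
/- For any real symmetric matrix A with eigendecomposition A = VΛVᵀ (V orthogonal, Λ diagonal), the (1,1)-norm of the diagonal matrix of eigenvalues is at most the (1,1)-norm of A: ‖Λ‖_{(1,1)} ≤ ‖A‖_{(1,1)}. -/
open Matrix

/-- Entrywise (1,1)-norm of a matrix. -/
noncomputable def norm11 {α β : Type*} [Fintype α] [Fintype β]
    (M : Matrix α β ℝ) : ℝ := ∑ i, ∑ j, |M i j|

/-- For a real symmetric matrix `A = V Λ Vᵀ` with `V` orthogonal and `Λ`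
diagonal, the (1,1)-norm of `Λ` is at most that of `A`. -/
theorem norm11_eigenvalues_le {d : ℕ}
    (A V Λ : Matrix (Fin d) (Fin d) ℝ)
    (hA : A.IsSymm)
    (hV : V * Vᵀ = 1) (hV' : Vᵀ * V = 1)
    (hΛ : Λ.IsDiag)
    (hdec : A = V * Λ * Vᵀ) :
    norm11 Λ ≤ norm11 A := by
  have hΛeq : Λ = Vᵀ * A * V := by
    rw [hdec]
    symm
    calc Vᵀ * (V * Λ * Vᵀ) * V = (Vᵀ * V) * Λ * (Vᵀ * V) := by
          simp only [Matrix.mul_assoc]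
      _ = Λ := by rw [hV']; simp
  -- rows of V are unit vectors
  have hrow : ∀ j : Fin d, ∑ i, (V j i) ^ 2 = 1 := by
    intro j
    have := congrFun (congrFun hV j) j
    simpa [Matrix.mul_apply, Matrix.one_apply, sq] using this
  have hCS : ∀ j k : Fin d, ∑ i, |V j i| * |V k i| ≤ 1 := by
    intro j k
    have h := Finset.sum_mul_sq_le_sq_mul_sq Finset.univ
      (fun i => |V j i|) (fun i => |V k i|)
    have h1 : ∑ i, |V j i| ^ 2 = 1 := by
      simpa [sq_abs] using hrow j
    have h2 : ∑ i, |V k i| ^ 2 = 1 := by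
      simpa [sq_abs] using hrow k
    simp only [h1, h2, one_mul] at h
    have hnn : (0:ℝ) ≤ ∑ i, |V j i| * |V k i| :=
      Finset.sum_nonneg fun i _ => mul_nonneg (abs_nonneg _) (abs_nonneg _)
    nlinarith
  -- norm11 Λ is the sum of |diagonal entries|
  have hdiag : norm11 Λ = ∑ i, |Λ i i| := by
    unfold norm11
    refine Finset.sum_congr rfl fun i _ => ?_
    refine Finset.sum_eq_single i (fun j _ hj => ?_) (by simp)
    rw [hΛ (Ne.symm hj)]; simp
  rw [hdiag]
  have hΛii : ∀ i : Fin d, Λ i i = ∑ j, ∑ k, V j i * A j k * V k i := by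
    intro i
    rw [hΛeq]
    simp only [Matrix.mul_apply, Matrix.transpose_apply, Finset.sum_mul]
    rw [Finset.sum_comm]
  calc ∑ i, |Λ i i| ≤ ∑ i, ∑ j, ∑ k, |V j i| * |A j k| * |V k i| := by
        refine Finset.sum_le_sum fun i _ => ?_
        rw [hΛii i]
        refine (Finset.abs_sum_le_sum_abs _ _).trans ?_
        refine Finset.sum_le_sum fun j _ => ?_
        refine (Finset.abs_sum_le_sum_abs _ _).trans ?_
        refine Finset.sum_le_sum fun k _ => ?_
        rw [abs_mul, abs_mul]
    _ = ∑ j, ∑ k, (∑ i, |V j i| * |V k i|) * |A j k| := by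
        rw [Finset.sum_comm]
        refine Finset.sum_congr rfl fun j _ => ?_
        rw [Finset.sum_comm]
        refine Finset.sum_congr rfl fun k _ => ?_
        rw [Finset.sum_mul]
        refine Finset.sum_congr rfl fun i _ => ?_
        ring
    _ ≤ ∑ j, ∑ k, 1 * |A j k| := by
        refine Finset.sum_le_sum fun j _ => Finset.sum_le_sum fun k _ => ?_
        exact mul_le_mul_of_nonneg_right (hCS j k) (abs_nonneg _)
    _ = norm11 A := by simp [norm11]
end

section
/- Let H = A ⊗ B where A is a real symmetric n×n matrix and B is a real symmetric m×m matrix, with eigendecompositions A = VΛ_A Vᵀ and B = UΛ_B Uᵀ. Then the rotated Hessians H_U = (I ⊗ Uᵀ)H(I ⊗ U) and H_{U,V} = (Vᵀ ⊗ Uᵀ)H(V ⊗ U) satisfy ‖H_{U,V}‖_{(1,1)} ≤ ‖H_U‖_{(1,1)} ≤ ‖H‖_{(1,1)}. -/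
open Matrix Kronecker

lemma norm11_nonneg {α β : Type*} [Fintype α] [Fintype β] (M : Matrix α β ℝ) :
    0 ≤ norm11 M := by
  unfold norm11
  positivity

lemma norm11_kronecker {n m : ℕ} (X : Matrix (Fin n) (Fin n) ℝ)
    (Y : Matrix (Fin m) (Fin m) ℝ) :
    norm11 (X ⊗ₖ Y) = norm11 X * norm11 Y := by
  unfold norm11
  rw [Finset.sum_mul_sum Finset.univ Finset.univ (fun i => ∑ j, |X i j|)
    (fun p => ∑ q, |Y p q|)]
  simp_rw [Fintype.sum_prod_type, kroneckerMap_apply, abs_mul]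
  refine Finset.sum_congr rfl fun i _ => Finset.sum_congr rfl fun p _ => ?_
  rw [Finset.sum_mul_sum Finset.univ Finset.univ (fun j => |X i j|)
    (fun q => |Y p q|)]

/-- Key lemma: if `Λ = Vᵀ A V` is diagonal with `V` having unit-norm rows,
then `norm11 Λ ≤ norm11 A`. -/
lemma norm11_diag_le {n : ℕ} (A V Λ : Matrix (Fin n) (Fin n) ℝ)
    (hrows : ∀ j, ∑ i, (V j i) ^ 2 = 1)
    (hΛ : Λ.IsDiag) (hdec : Λ = Vᵀ * A * V) :
    norm11 Λ ≤ norm11 A := by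
  have hdiag : norm11 Λ = ∑ i, |Λ i i| := by
    unfold norm11
    congr 1; ext i
    rw [Finset.sum_eq_single i]
    · intro j _ hj; rw [hΛ (Ne.symm hj), abs_zero]
    · intro h; exact absurd (Finset.mem_univ i) h
  rw [hdiag]
  have hentry : ∀ i, Λ i i = ∑ j, ∑ k, V j i * A j k * V k i := by
    intro i
    rw [hdec]
    simp only [Matrix.mul_apply, transpose_apply, Finset.sum_mul]
    rw [Finset.sum_comm]
  calc ∑ i, |Λ i i| ≤ ∑ i, ∑ j, ∑ k, |V j i| * |A j k| * |V k i| := by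
        apply Finset.sum_le_sum
        intro i _
        rw [hentry i]
        refine (Finset.abs_sum_le_sum_abs _ _).trans ?_
        apply Finset.sum_le_sum
        intro j _
        refine (Finset.abs_sum_le_sum_abs _ _).trans ?_
        apply Finset.sum_le_sum
        intro k _
        rw [abs_mul, abs_mul]
    _ = ∑ j, ∑ k, |A j k| * (∑ i, |V j i| * |V k i|) := by
        rw [Finset.sum_comm]
        congr 1; ext j
        rw [Finset.sum_comm]
        congr 1; ext k
        rw [Finset.mul_sum]
        congr 1; ext i
        ring
    _ ≤ ∑ j, ∑ k, |A j k| * 1 := by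
        apply Finset.sum_le_sum; intro j _
        apply Finset.sum_le_sum; intro k _
        apply mul_le_mul_of_nonneg_left _ (abs_nonneg _)
        have hcs := Finset.sum_mul_sq_le_sq_mul_sq Finset.univ
          (fun i => |V j i|) (fun i => |V k i|)
        simp only [sq_abs] at hcs
        rw [hrows j, hrows k, one_mul] at hcs
        have hnn : (0:ℝ) ≤ ∑ i, |V j i| * |V k i| :=
          Finset.sum_nonneg fun i _ => mul_nonneg (abs_nonneg _) (abs_nonneg _)
        nlinarith [hcs, hnn]
    _ = norm11 A := by simp [norm11]

/-- For `H = A ⊗ B` with symmetric `A = V Λ_A Vᵀ`, `B = U Λ_B Uᵀ`, the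
rotated Hessians `H_U = (I ⊗ Uᵀ) H (I ⊗ U)` and
`H_{U,V} = (Vᵀ ⊗ Uᵀ) H (V ⊗ U)` satisfy
`‖H_{U,V}‖₍₁,₁₎ ≤ ‖H_U‖₍₁,₁₎ ≤ ‖H‖₍₁,₁₎`. -/
theorem norm11_rotated_hessians {n m : ℕ}
    (A V ΛA : Matrix (Fin n) (Fin n) ℝ)
    (B U ΛB : Matrix (Fin m) (Fin m) ℝ)
    (hAsymm : A.IsSymm) (hBsymm : B.IsSymm)
    (hV : V * Vᵀ = 1) (hV' : Vᵀ * V = 1)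
    (hU : U * Uᵀ = 1) (hU' : Uᵀ * U = 1)
    (hΛA : ΛA.IsDiag) (hΛB : ΛB.IsDiag)
    (hAdec : A = V * ΛA * Vᵀ) (hBdec : B = U * ΛB * Uᵀ) :
    norm11 ((Vᵀ ⊗ₖ Uᵀ) * (A ⊗ₖ B) * (V ⊗ₖ U)) ≤
      norm11 (((1 : Matrix (Fin n) (Fin n) ℝ) ⊗ₖ Uᵀ) * (A ⊗ₖ B) *
        ((1 : Matrix (Fin n) (Fin n) ℝ) ⊗ₖ U)) ∧
    norm11 (((1 : Matrix (Fin n) (Fin n) ℝ) ⊗ₖ Uᵀ) * (A ⊗ₖ B) *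
        ((1 : Matrix (Fin n) (Fin n) ℝ) ⊗ₖ U)) ≤ norm11 (A ⊗ₖ B) := by
  have hΛAeq : Vᵀ * A * V = ΛA := by
    rw [hAdec]; rw [show Vᵀ * (V * ΛA * Vᵀ) * V = (Vᵀ * V) * ΛA * (Vᵀ * V) by
      simp [Matrix.mul_assoc], hV']
    simp
  have hΛBeq : Uᵀ * B * U = ΛB := by
    rw [hBdec]; rw [show Uᵀ * (U * ΛB * Uᵀ) * U = (Uᵀ * U) * ΛB * (Uᵀ * U) by
      simp [Matrix.mul_assoc], hU']
    simp
  have h1 : (Vᵀ ⊗ₖ Uᵀ) * (A ⊗ₖ B) * (V ⊗ₖ U) = ΛA ⊗ₖ ΛB := by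
    rw [← Matrix.mul_kronecker_mul, ← Matrix.mul_kronecker_mul, hΛAeq, hΛBeq]
  have h2 : ((1 : Matrix (Fin n) (Fin n) ℝ) ⊗ₖ Uᵀ) * (A ⊗ₖ B) *
      ((1 : Matrix (Fin n) (Fin n) ℝ) ⊗ₖ U) = A ⊗ₖ ΛB := by
    rw [← Matrix.mul_kronecker_mul, ← Matrix.mul_kronecker_mul, hΛBeq]
    simp
  rw [h1, h2, norm11_kronecker, norm11_kronecker, norm11_kronecker]
  -- rows of V have unit norm: from V * Vᵀ = 1
  have hVrows : ∀ j, ∑ i, (V j i) ^ 2 = 1 := by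
    intro j
    have := congrFun (congrFun hV j) j
    simp [Matrix.mul_apply, Matrix.one_apply, sq] at this ⊢
    exact this
  have hUrows : ∀ j, ∑ i, (U j i) ^ 2 = 1 := by
    intro j
    have := congrFun (congrFun hU j) j
    simp [Matrix.mul_apply, Matrix.one_apply, sq] at this ⊢
    exact this
  have hA := norm11_diag_le A V ΛA hVrows hΛA (by rw [hΛAeq])
  have hB := norm11_diag_le B U ΛB hUrows hΛB (by rw [hΛBeq])
  constructor
  · exact mul_le_mul_of_nonneg_right hA (norm11_nonneg _)
  · exact mul_le_mul_of_nonneg_left hB (norm11_nonneg _)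
end

section
/- Let 0 < β₂ < 1 and let {v_t}_{t=0}^T and {g_t}_{t=1}^T be real sequences with v₀ ≥ 0, v₁ > 0, v_t nondecreasing in the sense that v_t - β₂ v_{t-1} ≥ (1-β₂) g_t² for all t ≥ 1. Then Σ_{t=1}^T g_t²/v_t ≤ T + (β₂/(1-β₂)) · ln(v_T/v₀), provided v₀ > 0. -/
lemma log_frac_bound {x y : ℝ} (hx : 0 < x) (hy : 0 < y) :
    (x - y) / x ≤ Real.log (x / y) := by
  have h := Real.log_le_sub_one_of_pos (div_pos hy hx)
  have hlog : Real.log (x / y) = - Real.log (y / x) := by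
    rw [Real.log_div hx.ne' hy.ne', Real.log_div hy.ne' hx.ne']; ring
  rw [hlog]
  have : (x - y) / x = -(y / x - 1) := by field_simp; ring
  rw [this]
  linarith

/-- Log-sum inequality for Adam-type second-moment sequences:
if `0 < β₂ < 1`, `v₀ > 0`, `v₁ > 0`, `v_t > 0` for `t ≥ 1`, and
`v_t - β₂ v_{t-1} ≥ (1-β₂) g_t²` for all `t ≥ 1`, then
`Σ_{t=1}^T g_t²/v_t ≤ T + (β₂/(1-β₂)) ln(v_T/v₀)`. -/
theorem adam_log_sum_inequality (β₂ : ℝ) (hβ0 : 0 < β₂) (hβ1 : β₂ < 1)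
    (T : ℕ) (v g : ℕ → ℝ)
    (hv0 : 0 < v 0) (hv1 : 0 < v 1)
    (hvpos : ∀ t, 1 ≤ t → 0 < v t)
    (hrec : ∀ t, 1 ≤ t → v t - β₂ * v (t - 1) ≥ (1 - β₂) * (g t) ^ 2) :
    ∑ t ∈ Finset.Icc 1 T, (g t) ^ 2 / v t ≤
      (T : ℝ) + β₂ / (1 - β₂) * Real.log (v T / v 0) := by
  have hvpos' : ∀ t, 0 < v t := by
    intro t
    cases t with
    | zero => exact hv0
    | succ n => exact hvpos (n + 1) (Nat.succ_le_succ (Nat.zero_le n))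
  have hβ : 0 < 1 - β₂ := by linarith
  induction T with
  | zero => simp [div_self hv0.ne']
  | succ n ih =>
    rw [Finset.sum_Icc_succ_top (Nat.succ_le_succ (Nat.zero_le n))]
    have hterm : (g (n + 1)) ^ 2 / v (n + 1) ≤
        1 + β₂ / (1 - β₂) * Real.log (v (n + 1) / v n) := by
      have h1 := hrec (n + 1) (Nat.succ_le_succ (Nat.zero_le n))
      simp only [Nat.add_sub_cancel] at h1
      have hv := hvpos' (n + 1)
      have h2 : (g (n + 1)) ^ 2 / v (n + 1) ≤
          (v (n + 1) - β₂ * v n) / ((1 - β₂) * v (n + 1)) := by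
        rw [div_le_div_iff₀ hv (by positivity)]
        nlinarith
      have h3 : (v (n + 1) - β₂ * v n) / ((1 - β₂) * v (n + 1)) =
          1 + β₂ / (1 - β₂) * ((v (n + 1) - v n) / v (n + 1)) := by
        field_simp
        ring
      have h4 : (v (n + 1) - v n) / v (n + 1) ≤ Real.log (v (n + 1) / v n) :=
        log_frac_bound hv (hvpos' n)
      have h5 : β₂ / (1 - β₂) * ((v (n + 1) - v n) / v (n + 1)) ≤
          β₂ / (1 - β₂) * Real.log (v (n + 1) / v n) := by
        apply mul_le_mul_of_nonneg_left h4 (by positivity)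
      linarith [h2, h3 ▸ h2]
    have hlog : Real.log (v (n + 1) / v 0) =
        Real.log (v n / v 0) + Real.log (v (n + 1) / v n) := by
      rw [Real.log_div (hvpos' (n+1)).ne' hv0.ne', Real.log_div (hvpos' n).ne' hv0.ne',
        Real.log_div (hvpos' (n+1)).ne' (hvpos' n).ne']
      ring
    push_cast
    rw [hlog]
    linarith
end

section
/- For the one-sided rotation, if A is n×n, B is m×m symmetric with B = UΛ_B Uᵀ, then (I ⊗ Uᵀ)(A ⊗ B)(I ⊗ U) = A ⊗ Λ_B, and therefore ‖(I ⊗ Uᵀ)(A ⊗ B)(I ⊗ U)‖_{(1,1)} = ‖A‖_{(1,1)} · ‖Λ_B‖_{(1,1)} ≤ ‖A‖_{(1,1)} · ‖B‖_{(1,1)} = ‖A ⊗ B‖_{(1,1)}. -/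
open Matrix Kronecker

lemma norm11_kron {α β γ δ : Type*} [Fintype α] [Fintype β] [Fintype γ] [Fintype δ]
    (M : Matrix α β ℝ) (N : Matrix γ δ ℝ) :
    norm11 (M ⊗ₖ N) = norm11 M * norm11 N := by
  simp only [norm11, kroneckerMap_apply, Fintype.sum_prod_type, abs_mul,
    Finset.sum_mul, Finset.mul_sum]
  rw [Finset.sum_comm]
  apply Finset.sum_congr rfl; intro j _
  conv_lhs => enter [2,i]; rw [Finset.sum_comm]
  rw [Finset.sum_comm]

/-- One-sided rotation: if `B = U Λ_B Uᵀ` is an orthogonal eigendecomposition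
of the symmetric matrix `B`, then `(I ⊗ Uᵀ)(A ⊗ B)(I ⊗ U) = A ⊗ Λ_B`, and
`‖(I ⊗ Uᵀ)(A ⊗ B)(I ⊗ U)‖₍₁,₁₎ = ‖A‖₍₁,₁₎‖Λ_B‖₍₁,₁₎ ≤ ‖A‖₍₁,₁₎‖B‖₍₁,₁₎
 = ‖A ⊗ B‖₍₁,₁₎`. -/
theorem one_sided_rotation_norm11 {n m : ℕ}
    (A : Matrix (Fin n) (Fin n) ℝ)
    (B U ΛB : Matrix (Fin m) (Fin m) ℝ)
    (hBsymm : B.IsSymm)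
    (hU : U * Uᵀ = 1) (hU' : Uᵀ * U = 1)
    (hΛB : ΛB.IsDiag)
    (hBdec : B = U * ΛB * Uᵀ) :
    ((1 : Matrix (Fin n) (Fin n) ℝ) ⊗ₖ Uᵀ) * (A ⊗ₖ B) *
        ((1 : Matrix (Fin n) (Fin n) ℝ) ⊗ₖ U) = A ⊗ₖ ΛB ∧
    norm11 (((1 : Matrix (Fin n) (Fin n) ℝ) ⊗ₖ Uᵀ) * (A ⊗ₖ B) *
        ((1 : Matrix (Fin n) (Fin n) ℝ) ⊗ₖ U)) = norm11 A * norm11 ΛB ∧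
    norm11 A * norm11 ΛB ≤ norm11 A * norm11 B ∧
    norm11 A * norm11 B = norm11 (A ⊗ₖ B) := by
  have hmid : Uᵀ * (U * ΛB * Uᵀ) * U = ΛB := by
    calc Uᵀ * (U * ΛB * Uᵀ) * U = (Uᵀ * U) * ΛB * (Uᵀ * U) := by
          simp only [Matrix.mul_assoc]
      _ = ΛB := by rw [hU', Matrix.one_mul, Matrix.mul_one]
  have h1 : ((1 : Matrix (Fin n) (Fin n) ℝ) ⊗ₖ Uᵀ) * (A ⊗ₖ B) *
      ((1 : Matrix (Fin n) (Fin n) ℝ) ⊗ₖ U) = A ⊗ₖ ΛB := by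
    rw [← Matrix.mul_kronecker_mul, ← Matrix.mul_kronecker_mul, Matrix.one_mul,
      Matrix.mul_one, hBdec, hmid]
  refine ⟨h1, by rw [h1, norm11_kron], ?_, (norm11_kron A B).symm⟩
  -- key: norm11 ΛB ≤ norm11 B
  have hΛeq : ΛB = Uᵀ * B * U := by rw [hBdec, hmid]
  have hrow : ∀ j k : Fin m, ∑ i, |U j i| * |U k i| ≤ 1 := by
    intro j k
    have hcs := Finset.sum_mul_sq_le_sq_mul_sq Finset.univ
      (fun i => |U j i|) (fun i => |U k i|)
    have hj : ∑ i, |U j i| ^ 2 = 1 := by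
      have := congrArg (fun M => M j j) hU
      simp [Matrix.mul_apply, Matrix.one_apply, sq_abs, pow_two] at this ⊢
      simpa [pow_two] using this
    have hk : ∑ i, |U k i| ^ 2 = 1 := by
      have := congrArg (fun M => M k k) hU
      simp [Matrix.mul_apply, Matrix.one_apply, sq_abs, pow_two] at this ⊢
      simpa [pow_two] using this
    rw [hj, hk, mul_one] at hcs
    have hnn : 0 ≤ ∑ i, |U j i| * |U k i| :=
      Finset.sum_nonneg fun _ _ => mul_nonneg (abs_nonneg _) (abs_nonneg _)
    nlinarith
  have hkey : norm11 ΛB ≤ norm11 B := by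
    have hdiag : norm11 ΛB = ∑ i, |ΛB i i| := by
      unfold norm11
      apply Finset.sum_congr rfl; intro i _
      rw [Finset.sum_eq_single i]
      · intro j _ hj; rw [hΛB (Ne.symm hj), abs_zero]
      · intro h; exact absurd (Finset.mem_univ i) h
    rw [hdiag]
    have hentry : ∀ i : Fin m, |ΛB i i| ≤ ∑ k, ∑ j, |U j i| * |B j k| * |U k i| := by
      intro i
      rw [hΛeq]
      simp only [Matrix.mul_apply, Matrix.transpose_apply]
      refine (Finset.abs_sum_le_sum_abs _ _).trans ?_
      apply Finset.sum_le_sum; intro k _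
      rw [abs_mul]
      calc |∑ j, U j i * B j k| * |U k i|
          ≤ (∑ j, |U j i * B j k|) * |U k i| :=
            mul_le_mul_of_nonneg_right (Finset.abs_sum_le_sum_abs _ _) (abs_nonneg _)
        _ = ∑ j, |U j i| * |B j k| * |U k i| := by
            rw [Finset.sum_mul]; simp [abs_mul]
    calc ∑ i, |ΛB i i| ≤ ∑ i, ∑ k, ∑ j, |U j i| * |B j k| * |U k i| :=
          Finset.sum_le_sum fun i _ => hentry i
      _ = ∑ k, ∑ j, |B j k| * ∑ i, |U j i| * |U k i| := by
          rw [Finset.sum_comm]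
          apply Finset.sum_congr rfl; intro k _
          rw [Finset.sum_comm]
          apply Finset.sum_congr rfl; intro j _
          rw [Finset.mul_sum]
          apply Finset.sum_congr rfl; intro i _
          ring
      _ ≤ ∑ k, ∑ j, |B j k| * 1 :=
          Finset.sum_le_sum fun k _ => Finset.sum_le_sum fun j _ =>
            mul_le_mul_of_nonneg_left (hrow j k) (abs_nonneg _)
      _ = norm11 B := by unfold norm11; rw [Finset.sum_comm]; simp
  have := mul_le_mul_of_nonneg_left hkey (norm11_nonneg A)
  exact this
end
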